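/- arXiv:2603.13156 — 2 statements merged into one kernel-verified Lean document; each statement's English description precedes it below -/
import Mathlib

section
/- Let B ≥ 1, and let m, n ≥ 0 be integers. Let A_1, ..., A_B be nonnegative integers with Σ_b A_b = m (pre-shift bin counts), and define q̂_b = (1 + A_b)/(B + m). Let θ = (θ_1, ..., θ_B) be a probability vector, and let C_1, ..., C_B be the bin counts of n i.i.d. draws landing in bin b with probability θ_b (multinomial(n, θ)); let the next draw fall in bin b independently with probability θ_b, and set e = B · (1 + A_b + C_b)/(B + m + n) where b is the bin of the next draw. Define γ = B Σ_b θ_b q̂_b − 1 and δ = Σ_b θ_b² − 1/B. Then E[e | A_1, ..., A_B] = 1 + ((B + m)/(B + m + n)) γ + (n/(B + m + n)) B δ. -/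
/-!
Write `e = B/(B+m+n) · ((1 + A_Y) + Σ_{i<n} 1{X_i = Y})` with `Y` the new draw. By linearity,
`E[1 + A_Y] = Σ_b θ_b (1 + A_b)`, and by independence of `X_i` and `Y` each match has probability
`Σ_b θ_b²`. The claimed formula is an algebraic rewriting of
`B/(B+m+n) · (Σ_b θ_b (1 + A_b) + n Σ_b θ_b²)` in terms of `γ` and `δ`.
-/

open MeasureTheory ProbabilityTheory

namespace ProbabilityTheory

variable {Ω α β : Type*} [MeasurableSpace Ω] {μ : Measure Ω}
  [MeasurableSpace α] [MeasurableSingletonClass α]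
  [MeasurableSpace β] [MeasurableSingletonClass β]

theorem integrable_comp_of_finite [Finite α] [IsFiniteMeasure μ] {X : Ω → α}
    (hX : Measurable X) (f : α → ℝ) : Integrable (fun ω => f (X ω)) μ :=
  (Integrable.of_finite (μ := μ.map X)).comp_measurable hX

theorem integral_comp_eq_sum_of_law [Fintype α] [IsFiniteMeasure μ] {X : Ω → α}
    (hX : Measurable X) {p : α → ℝ} (hp0 : ∀ a, 0 ≤ p a)
    (hp : ∀ a, μ {ω | X ω = a} = ENNReal.ofReal (p a))
    (f : α → ℝ) : ∫ ω, f (X ω) ∂μ = ∑ a, p a * f a := by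
  rw [← integral_map hX.aemeasurable Integrable.of_finite.aestronglyMeasurable,
    integral_fintype .of_finite]
  refine Finset.sum_congr rfl fun a _ => ?_
  rw [map_measureReal_apply hX (measurableSet_singleton a), smul_eq_mul]
  simp [Measure.real, Set.preimage, hp, hp0]

theorem IndepFun.measure_prodMk_eq_of_laws {X : Ω → α} {Y : Ω → β} (hXY : IndepFun X Y μ)
    {p : α → ℝ} {q : β → ℝ} (hp0 : ∀ a, 0 ≤ p a)
    (hp : ∀ a, μ {ω | X ω = a} = ENNReal.ofReal (p a))
    (hq : ∀ b, μ {ω | Y ω = b} = ENNReal.ofReal (q b)) (a : α) (b : β) :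
    μ {ω | (X ω, Y ω) = (a, b)} = ENNReal.ofReal (p a * q b) := by
  have hmul := hXY.measure_inter_preimage_eq_mul _ _
    (measurableSet_singleton a) (measurableSet_singleton b)
  simp only [Set.preimage, Set.mem_singleton_iff] at hmul
  simp only [Prod.mk.injEq, Set.ofPred_and, hmul, hp, hq, ENNReal.ofReal_mul (hp0 a)]

theorem IndepFun.integral_ite_eq_eq_sum_sq [Fintype α] [DecidableEq α] [IsFiniteMeasure μ]
    {X Y : Ω → α} (hX : Measurable X) (hY : Measurable Y) (hXY : IndepFun X Y μ)
    {p : α → ℝ} (hp0 : ∀ a, 0 ≤ p a)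
    (hpX : ∀ a, μ {ω | X ω = a} = ENNReal.ofReal (p a))
    (hpY : ∀ a, μ {ω | Y ω = a} = ENNReal.ofReal (p a)) :
    ∫ ω, (if X ω = Y ω then (1 : ℝ) else 0) ∂μ = ∑ a, p a ^ 2 := by
  rw [integral_comp_eq_sum_of_law (hX.prodMk hY) (p := fun ab => p ab.1 * p ab.2)
    (fun ab => mul_nonneg (hp0 _) (hp0 _))
    (fun ab => hXY.measure_prodMk_eq_of_laws hp0 hpX hpY ab.1 ab.2)
    (fun ab => if ab.1 = ab.2 then 1 else 0),
    Fintype.sum_prod_type]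
  simp [sq]

end ProbabilityTheory

theorem finite_time_mean_gain_general
    {Ω : Type*} [MeasurableSpace Ω] (μ : Measure Ω) [IsProbabilityMeasure μ]
    (B m n : ℕ) (hB : 1 ≤ B)
    (A : Fin B → ℕ)
    (θ : Fin B → ℝ) (hθ_nonneg : ∀ b, 0 ≤ θ b)
    (X : Fin (n + 1) → Ω → Fin B) (hX_meas : ∀ i, Measurable (X i))
    (hX_indep : iIndepFun X μ)
    (hX_law : ∀ i b, μ {ω | X i ω = b} = ENNReal.ofReal (θ b))
    (γ δ : ℝ)
    (hγ : γ = (B : ℝ) * (∑ b, θ b * ((1 + (A b : ℝ)) / ((B : ℝ) + m))) - 1)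
    (hδ : δ = (∑ b, θ b ^ 2) - 1 / B) :
    ∫ ω, (B : ℝ) *
        (1 + (A (X (Fin.last n) ω) : ℝ) +
          ((Finset.univ.filter fun i : Fin n =>
            X i.castSucc ω = X (Fin.last n) ω).card : ℝ)) / ((B : ℝ) + m + n) ∂μ
      = 1 + ((B + m : ℝ) / ((B : ℝ) + m + n)) * γ
          + ((n : ℝ) / ((B : ℝ) + m + n)) * ((B : ℝ) * δ) := by
  set Y := X (Fin.last n)
  have hY : Measurable Y := hX_meas _
  have mean_prior : ∫ ω, (1 + (A (Y ω) : ℝ)) ∂μ = ∑ b, θ b * (1 + A b) :=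
    integral_comp_eq_sum_of_law hY hθ_nonneg (hX_law _) (fun b => 1 + (A b : ℝ))
  have mean_match (i : Fin n) :
      ∫ ω, (if X i.castSucc ω = Y ω then (1 : ℝ) else 0) ∂μ = ∑ b, θ b ^ 2 :=
    (hX_indep.indepFun (Fin.castSucc_lt_last i).ne).integral_ite_eq_eq_sum_sq (hX_meas _) hY
      hθ_nonneg (hX_law _) (hX_law _)
  have hmatch_int (i : Fin n) :
      Integrable (fun ω => if X i.castSucc ω = Y ω then (1 : ℝ) else 0) μ :=
    integrable_comp_of_finite ((hX_meas _).prodMk hY) fun ab => if ab.1 = ab.2 then 1 else 0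
  simp_rw [Finset.natCast_card_filter, mul_div_right_comm (B : ℝ)]
  rw [integral_const_mul, integral_add (integrable_comp_of_finite hY fun b => 1 + (A b : ℝ))
    (integrable_finsetSum _ fun i _ => hmatch_int i), integral_finsetSum _ fun i _ => hmatch_int i,
    mean_prior]
  simp_rw [mean_match, Finset.sum_const, Finset.card_univ, Fintype.card_fin, nsmul_eq_mul]
  have hBpos : (0 : ℝ) < B := by exact_mod_cast hB
  simp_rw [← mul_div_assoc, ← Finset.sum_div] at hγ
  rw [hγ, hδ]
  field_simp
  ring

/-- Finite-time mean gain of the histogram betting scheme: with pre-shift counts `A_b`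
summing to `m`, post-shift counts `C_b` from `n` i.i.d. draws with bin probabilities `θ`,
and a further independent draw with the same law, the e-value
`e = B(1 + A_b + C_b)/(B + m + n)` evaluated at the bin `b` of the new draw satisfies
`E[e] = 1 + ((B+m)/(B+m+n))γ + (n/(B+m+n))Bδ`. -/
theorem finite_time_mean_gain
    {Ω : Type*} [MeasurableSpace Ω] (μ : Measure Ω) [IsProbabilityMeasure μ]
    (B m n : ℕ) (hB : 1 ≤ B)
    (A : Fin B → ℕ) (hA : ∑ b, A b = m)
    (θ : Fin B → ℝ) (hθ_nonneg : ∀ b, 0 ≤ θ b) (hθ_sum : ∑ b, θ b = 1)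
    (X : Fin (n + 1) → Ω → Fin B) (hX_meas : ∀ i, Measurable (X i))
    (hX_indep : iIndepFun X μ)
    (hX_law : ∀ i b, μ {ω | X i ω = b} = ENNReal.ofReal (θ b))
    (γ δ : ℝ)
    (hγ : γ = (B : ℝ) * (∑ b, θ b * ((1 + (A b : ℝ)) / ((B : ℝ) + m))) - 1)
    (hδ : δ = (∑ b, θ b ^ 2) - 1 / B) :
    ∫ ω, (B : ℝ) *
        (1 + (A (X (Fin.last n) ω) : ℝ) +
          ((Finset.univ.filter fun i : Fin n =>
            X i.castSucc ω = X (Fin.last n) ω).card : ℝ)) / ((B : ℝ) + m + n) ∂μ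
      = 1 + ((B + m : ℝ) / ((B : ℝ) + m + n)) * γ
          + ((n : ℝ) / ((B : ℝ) + m + n)) * ((B : ℝ) * δ) :=
  finite_time_mean_gain_general μ B m n hB A θ hθ_nonneg X hX_meas hX_indep hX_law γ δ hγ hδ
end

section
/- Let (F_t)_{t≥0} be a filtration and (e_t)_{t≥1} nonnegative integrable adapted random variables with E[e_t | F_{t−1}] ≤ 1 almost surely for every t. Define the mixture e-process M_t = Σ_{τ=1}^{t} w_τ ∏_{s=τ}^{t} e_s with weights w_τ = 1/(τ(τ+1)). Then for every α ∈ (0, 1], P(sup_{t≥1} M_t ≥ 1/α) ≤ α. -/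
/-!
Add to `M_t` the weight `1 / (t + 1) = ∑_{τ > t} w_τ` of the changepoints not yet reached:
`N_t = M_t + 1 / (t + 1)` starts at `N_0 = 1` and satisfies
`N_{t+1} = (M_t + w_{t+1}) e_{t+1} + 1 / (t + 2)`. As `M_t + w_{t+1}` is `F_t`-measurable and
`E[e_{t+1} | F_t] ≤ 1`, this gives `E[N_{t+1} | F_t] ≤ M_t + w_{t+1} + 1 / (t + 2) = N_t`, so
`N` is a nonnegative supermartingale, and Ville's inequality bounds `P(sup_t N_t ≥ 1/α)` by
`α E[N_0] = α`.
-/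

open MeasureTheory Filter Topology

theorem integrable_of_tendsto_of_monotone_of_integral_le {α : Type*} {m0 : MeasurableSpace α}
    {μ : Measure α} {f : ℕ → α → ℝ} {F : α → ℝ} {C : ℝ} (hf : ∀ n, Integrable (f n) μ)
    (hf_nonneg : ∀ n, 0 ≤ᵐ[μ] f n) (hf_mono : ∀ᵐ x ∂μ, Monotone fun n ↦ f n x)
    (hf_tendsto : ∀ᵐ x ∂μ, Tendsto (fun n ↦ f n x) atTop (𝓝 (F x)))
    (hf_le : ∀ n, ∫ x, f n x ∂μ ≤ C) : Integrable F μ := by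
  have hF_nonneg : 0 ≤ᵐ[μ] F := by
    filter_upwards [hf_nonneg 0, hf_mono, hf_tendsto] with x h0 hmono hlim
    exact h0.trans (ge_of_tendsto' hlim fun n ↦ hmono (Nat.zero_le n))
  refine ⟨aestronglyMeasurable_of_tendsto_ae _ (fun n ↦ (hf n).1) hf_tendsto, ?_⟩
  rw [hasFiniteIntegral_iff_ofReal hF_nonneg]
  have hlim : Tendsto (fun n ↦ ∫⁻ x, ENNReal.ofReal (f n x) ∂μ) atTop
      (𝓝 (∫⁻ x, ENNReal.ofReal (F x) ∂μ)) :=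
    lintegral_tendsto_of_tendsto_of_monotone (fun n ↦ (hf n).aemeasurable.ennreal_ofReal)
      (by filter_upwards [hf_mono] with x hx n k hnk using ENNReal.ofReal_le_ofReal (hx hnk))
      (by filter_upwards [hf_tendsto] with x hx using (ENNReal.continuous_ofReal.tendsto _).comp hx)
  refine (le_of_tendsto' hlim fun n ↦ ?_).trans_lt (ENNReal.ofReal_lt_top (r := C))
  rw [← ofReal_integral_eq_lintegral_ofReal (hf n) (hf_nonneg n)]
  exact ENNReal.ofReal_le_ofReal (hf_le n)

section CondExpLeOne

variable {Ω : Type*} {m0 : MeasurableSpace Ω} {μ : Measure Ω} {m : MeasurableSpace Ω}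
  {g h : Ω → ℝ}

theorem condExp_mul_le_of_condExp_le_one (hg : StronglyMeasurable[m] g) (hg_nonneg : 0 ≤ g)
    (hgh : Integrable (g * h) μ) (hh : Integrable h μ) (hcond : μ[h|m] ≤ᵐ[μ] 1) :
    μ[g * h|m] ≤ᵐ[μ] g := by
  filter_upwards [condExp_mul_of_stronglyMeasurable_left hg hgh hh, hcond] with ω hpull hω
  rw [hpull]
  exact mul_le_of_le_one_right (hg_nonneg ω) hω

theorem integral_mul_le_of_condExp_le_one [IsFiniteMeasure μ] (hm : m ≤ m0)
    (hg : StronglyMeasurable[m] g) (hg_nonneg : 0 ≤ g) (hg_int : Integrable g μ)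
    (hgh : Integrable (g * h) μ) (hh : Integrable h μ) (hcond : μ[h|m] ≤ᵐ[μ] 1) :
    ∫ ω, (g * h) ω ∂μ ≤ ∫ ω, g ω ∂μ := by
  rw [← integral_condExp hm]
  exact integral_mono_ae integrable_condExp hg_int
    (condExp_mul_le_of_condExp_le_one hg hg_nonneg hgh hh hcond)

/-- Truncating `g` at level `n` gives integrable products whose integrals stay below `∫ g`. -/
theorem integrable_mul_of_condExp_le_one [IsFiniteMeasure μ] (hm : m ≤ m0)
    (hg : StronglyMeasurable[m] g) (hg_nonneg : 0 ≤ g) (hg_int : Integrable g μ)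
    (hh_nonneg : 0 ≤ h) (hh : Integrable h μ) (hcond : μ[h|m] ≤ᵐ[μ] 1) :
    Integrable (g * h) μ := by
  set gn : ℕ → Ω → ℝ := fun n ω ↦ min (g ω) n
  have hgn : ∀ n, StronglyMeasurable[m] (gn n) := fun n ↦ hg.inf stronglyMeasurable_const
  have hgn_nonneg : ∀ n, 0 ≤ gn n := fun n ω ↦ le_min (hg_nonneg ω) n.cast_nonneg
  have hgn_norm_le : ∀ n, ∀ ω, ‖gn n ω‖ ≤ n := fun n ω ↦ by
    rw [Real.norm_of_nonneg (hgn_nonneg n ω)]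
    exact min_le_right _ _
  have hgn_int : ∀ n, Integrable (gn n) μ := fun n ↦
    hg_int.mono ((hgn n).mono hm).aestronglyMeasurable (ae_of_all _ fun ω ↦ by
      simp only [Real.norm_of_nonneg (hgn_nonneg n ω), Real.norm_of_nonneg (hg_nonneg ω)]
      exact min_le_left _ _)
  have hgnh_int : ∀ n, Integrable (gn n * h) μ := fun n ↦
    hh.bdd_mul ((hgn n).mono hm).aestronglyMeasurable (ae_of_all _ (hgn_norm_le n))
  refine integrable_of_tendsto_of_monotone_of_integral_le (f := fun n ↦ gn n * h) hgnh_int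
    (fun n ↦ ae_of_all _ fun ω ↦ mul_nonneg (hgn_nonneg n ω) (hh_nonneg ω))
    (ae_of_all _ fun ω n k hnk ↦ mul_le_mul_of_nonneg_right
      (min_le_min le_rfl (Nat.cast_le.2 hnk)) (hh_nonneg ω))
    (ae_of_all _ fun ω ↦ tendsto_atTop_of_eventually_const (i₀ := ⌈g ω⌉₊) fun n hn ↦ ?_)
    (C := ∫ ω, g ω ∂μ) fun n ↦ ?_
  · simp only [gn, Pi.mul_apply, min_eq_left ((Nat.le_ceil _).trans (Nat.cast_le.2 hn))]
  · exact (integral_mul_le_of_condExp_le_one hm (hgn n) (hgn_nonneg n) (hgn_int n) (hgnh_int n)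
      hh hcond).trans (integral_mono (hgn_int n) hg_int fun ω ↦ min_le_left _ _)

end CondExpLeOne

namespace MeasureTheory

variable {Ω : Type*} {m0 : MeasurableSpace Ω} {μ : Measure Ω} [IsFiniteMeasure μ]
  {𝒢 : Filtration ℕ m0} {f : ℕ → Ω → ℝ}

theorem Supermartingale.integral_stoppedValue_le (hf : Supermartingale f 𝒢 μ)
    {τ : Ω → WithTop ℕ} (hτ : IsStoppingTime 𝒢 τ) {n : ℕ} (hτ_le : ∀ ω, τ ω ≤ n) :
    ∫ ω, stoppedValue f τ ω ∂μ ≤ ∫ ω, f 0 ω ∂μ := by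
  have h := hf.neg.expected_stoppedValue_mono (isStoppingTime_const 𝒢 0) hτ
    (fun ω ↦ WithTop.coe_le_iff.2 fun k _ ↦ Nat.zero_le k) hτ_le
  change ∫ ω, -f 0 ω ∂μ ≤ ∫ ω, -stoppedValue f τ ω ∂μ at h
  rwa [integral_neg, integral_neg, neg_le_neg_iff] at h

theorem Supermartingale.mul_measureReal_exists_ge_le (hf : Supermartingale f 𝒢 μ)
    (hf_nonneg : ∀ t ω, 0 ≤ f t ω) (ε : ℝ) (n : ℕ) :
    ε * μ.real {ω | ∃ k ≤ n, ε ≤ f k ω} ≤ ∫ ω, f 0 ω ∂μ := by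
  set σ : Ω → WithTop ℕ := fun ω ↦ (hittingBtwn f (Set.Ici ε) 0 n ω : ℕ)
  have hσ : IsStoppingTime 𝒢 σ :=
    hf.stronglyAdapted.adapted.isStoppingTime_hittingBtwn measurableSet_Ici
  have hσ_le : ∀ ω, σ ω ≤ n := fun ω ↦ WithTop.coe_le_coe.2 (hittingBtwn_le ω)
  have hσ_int : Integrable (stoppedValue f σ) μ :=
    integrable_stoppedValue ℕ hσ hf.integrable hσ_le
  have hA : MeasurableSet {ω | ∃ k ≤ n, ε ≤ f k ω} := by
    simp only [Set.ofPred_exists]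
    exact MeasurableSet.iUnion fun k ↦ (MeasurableSet.const (k ≤ n)).inter <|
      measurableSet_le measurable_const ((hf.stronglyMeasurable k).measurable.le (𝒢.le k))
  calc ε * μ.real {ω | ∃ k ≤ n, ε ≤ f k ω}
      ≤ ∫ ω in {ω | ∃ k ≤ n, ε ≤ f k ω}, stoppedValue f σ ω ∂μ := by
        refine setIntegral_ge_of_const_le_real hA (measure_ne_top μ _) ?_ hσ_int.integrableOn
        rintro ω ⟨k, hk, hεk⟩
        exact stoppedValue_hittingBtwn_mem ⟨k, ⟨Nat.zero_le k, hk⟩, hεk⟩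
    _ ≤ ∫ ω, stoppedValue f σ ω ∂μ :=
        setIntegral_le_integral hσ_int (ae_of_all _ fun ω ↦ hf_nonneg _ ω)
    _ ≤ ∫ ω, f 0 ω ∂μ := hf.integral_stoppedValue_le hσ hσ_le

/-- **Ville's inequality**. -/
theorem Supermartingale.measure_exists_ge_le (hf : Supermartingale f 𝒢 μ)
    (hf_nonneg : ∀ t ω, 0 ≤ f t ω) {ε : ℝ} (hε : 0 < ε) :
    μ {ω | ∃ t, ε ≤ f t ω} ≤ ENNReal.ofReal ((∫ ω, f 0 ω ∂μ) / ε) := by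
  have hunion : {ω | ∃ t, ε ≤ f t ω} = ⋃ n, {ω | ∃ k ≤ n, ε ≤ f k ω} := by
    ext ω
    simp only [Set.mem_ofPred_eq, Set.mem_iUnion]
    exact ⟨fun ⟨t, ht⟩ ↦ ⟨t, t, le_rfl, ht⟩, fun ⟨_, k, _, hk⟩ ↦ ⟨k, hk⟩⟩
  have hmono : Monotone fun n ↦ {ω | ∃ k ≤ n, ε ≤ f k ω} :=
    fun _ _ hnm _ ⟨k, hk, hεk⟩ ↦ ⟨k, hk.trans hnm, hεk⟩
  rw [hunion, hmono.measure_iUnion]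
  refine iSup_le fun n ↦ ?_
  rw [← ofReal_measureReal]
  exact ENNReal.ofReal_le_ofReal
    ((le_div_iff₀' hε).2 (hf.mul_measureReal_exists_ge_le hf_nonneg ε n))

end MeasureTheory

noncomputable def changepointWeight (τ : ℕ) : ℝ := 1 / ((τ : ℝ) * ((τ : ℝ) + 1))

theorem changepointWeight_nonneg (τ : ℕ) : 0 ≤ changepointWeight τ := by
  unfold changepointWeight
  positivity

theorem changepointWeight_add_tail (t : ℕ) :
    changepointWeight (t + 1) + 1 / (((t + 1 : ℕ) : ℝ) + 1) = 1 / ((t : ℝ) + 1) := by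
  unfold changepointWeight
  push_cast
  field_simp
  ring

section MixtureEProcess

variable {Ω : Type*}

noncomputable def mixtureEProcess (e : ℕ → Ω → ℝ) (t : ℕ) (ω : Ω) : ℝ :=
  ∑ τ ∈ Finset.Icc 1 t, changepointWeight τ * ∏ s ∈ Finset.Icc τ t, e s ω

@[simp]
theorem mixtureEProcess_zero (e : ℕ → Ω → ℝ) : mixtureEProcess e 0 = 0 := by
  funext ω
  simp [mixtureEProcess]

theorem mixtureEProcess_succ (e : ℕ → Ω → ℝ) (t : ℕ) :
    mixtureEProcess e (t + 1) =
      (mixtureEProcess e t + fun _ ↦ changepointWeight (t + 1)) * e (t + 1) := by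
  funext ω
  simp only [mixtureEProcess, Pi.mul_apply, Pi.add_apply]
  rw [Finset.sum_Icc_succ_top (Nat.le_add_left 1 t), Finset.Icc_self, Finset.prod_singleton,
    add_mul, Finset.sum_mul]
  congr 1
  refine Finset.sum_congr rfl fun τ hτ ↦ ?_
  rw [Finset.prod_Icc_succ_top ((Finset.mem_Icc.1 hτ).2.trans t.le_succ), mul_assoc]

theorem mixtureEProcess_nonneg {e : ℕ → Ω → ℝ} (he_nonneg : ∀ t ω, 0 ≤ e t ω) (t : ℕ) (ω : Ω) :
    0 ≤ mixtureEProcess e t ω :=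
  Finset.sum_nonneg fun τ _ ↦ mul_nonneg (changepointWeight_nonneg τ)
    (Finset.prod_nonneg fun s _ ↦ he_nonneg s ω)

variable {m0 : MeasurableSpace Ω} {ℱ : Filtration ℕ m0} {e : ℕ → Ω → ℝ}

theorem stronglyMeasurable_mixtureEProcess
    (he_meas : ∀ t, 1 ≤ t → StronglyMeasurable[ℱ t] (e t)) (t : ℕ) :
    StronglyMeasurable[ℱ t] (mixtureEProcess e t) := by
  refine Finset.stronglyMeasurable_fun_sum _ fun τ hτ ↦ stronglyMeasurable_const.mul <|
    Finset.stronglyMeasurable_fun_prod _ fun s hs ↦ ?_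
  obtain ⟨hτs, hst⟩ := Finset.mem_Icc.1 hs
  exact (he_meas s ((Finset.mem_Icc.1 hτ).1.trans hτs)).mono (ℱ.mono hst)

variable {μ : Measure Ω} [IsFiniteMeasure μ]

theorem integrable_mixtureEProcess (he_nonneg : ∀ t ω, 0 ≤ e t ω)
    (he_int : ∀ t, Integrable (e t) μ) (he_meas : ∀ t, 1 ≤ t → StronglyMeasurable[ℱ t] (e t))
    (he_cond : ∀ t, 1 ≤ t → μ[e t | ℱ (t - 1)] ≤ᵐ[μ] fun _ => 1) (t : ℕ) :
    Integrable (mixtureEProcess e t) μ := by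
  induction t with
  | zero => simp
  | succ t ih =>
    rw [mixtureEProcess_succ]
    exact integrable_mul_of_condExp_le_one (ℱ.le t)
      ((stronglyMeasurable_mixtureEProcess he_meas t).add stronglyMeasurable_const)
      (fun ω ↦ add_nonneg (mixtureEProcess_nonneg he_nonneg t ω) (changepointWeight_nonneg _))
      (ih.add (integrable_const _)) (he_nonneg (t + 1)) (he_int (t + 1))
      (he_cond (t + 1) t.succ_pos)

theorem supermartingale_mixtureEProcess_add_tail (he_nonneg : ∀ t ω, 0 ≤ e t ω)
    (he_int : ∀ t, Integrable (e t) μ) (he_meas : ∀ t, 1 ≤ t → StronglyMeasurable[ℱ t] (e t))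
    (he_cond : ∀ t, 1 ≤ t → μ[e t | ℱ (t - 1)] ≤ᵐ[μ] fun _ => 1) :
    Supermartingale (fun t ω ↦ mixtureEProcess e t ω + 1 / ((t : ℝ) + 1)) ℱ μ := by
  have hM_int := integrable_mixtureEProcess he_nonneg he_int he_meas he_cond
  refine supermartingale_nat
    (fun t ↦ (stronglyMeasurable_mixtureEProcess he_meas t).add stronglyMeasurable_const)
    (fun t ↦ (hM_int t).add (integrable_const _)) fun t ↦ ?_
  set g := mixtureEProcess e t + fun _ ↦ changepointWeight (t + 1)
  have hg : StronglyMeasurable[ℱ t] g :=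
    (stronglyMeasurable_mixtureEProcess he_meas t).add stronglyMeasurable_const
  have hgh : Integrable (g * e (t + 1)) μ := mixtureEProcess_succ e t ▸ hM_int (t + 1)
  have hstep : μ[g * e (t + 1)|ℱ t] ≤ᵐ[μ] g :=
    condExp_mul_le_of_condExp_le_one hg
      (fun ω ↦ add_nonneg (mixtureEProcess_nonneg he_nonneg t ω) (changepointWeight_nonneg _))
      hgh (he_int (t + 1)) (he_cond (t + 1) t.succ_pos)
  have hsplit : μ[fun ω ↦ mixtureEProcess e (t + 1) ω + 1 / (((t + 1 : ℕ) : ℝ) + 1)|ℱ t]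
      =ᵐ[μ] μ[g * e (t + 1)|ℱ t] + fun _ ↦ 1 / (((t + 1 : ℕ) : ℝ) + 1) := by
    rw [mixtureEProcess_succ]
    exact (condExp_add hgh (integrable_const _) _).trans (by rw [condExp_const (ℱ.le t)])
  filter_upwards [hsplit, hstep] with ω hω hstepω
  rw [hω, Pi.add_apply, ← changepointWeight_add_tail t, ← add_assoc]
  exact add_le_add_left hstepω _

end MixtureEProcess

/-- Anytime-valid false alarm control: under the null (nonnegative e-values with
`E[e_t | F_{t−1}] ≤ 1` a.s.), the mixture e-process
`M_t = Σ_{τ=1}^t w_τ ∏_{s=τ}^t e_s`, `w_τ = 1/(τ(τ+1))`, crosses the threshold `1/α` at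
some time `t ≥ 1` with probability at most `α`, for any `α ∈ (0,1]`. -/
theorem pitmonitor_anytime_valid
    {Ω : Type*} {m0 : MeasurableSpace Ω} (μ : Measure Ω) [IsProbabilityMeasure μ]
    (ℱ : Filtration ℕ m0) (e : ℕ → Ω → ℝ)
    (he_nonneg : ∀ t ω, 0 ≤ e t ω)
    (he_int : ∀ t, Integrable (e t) μ)
    (he_meas : ∀ t, 1 ≤ t → StronglyMeasurable[ℱ t] (e t))
    (he_cond : ∀ t, 1 ≤ t → μ[e t | ℱ (t - 1)] ≤ᵐ[μ] fun _ => 1)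
    (α : ℝ) (hα : α ∈ Set.Ioc (0 : ℝ) 1) :
    μ {ω | ∃ t : ℕ, 1 ≤ t ∧ 1 / α ≤
        ∑ τ ∈ Finset.Icc 1 t, (1 / ((τ : ℝ) * ((τ : ℝ) + 1))) * ∏ s ∈ Finset.Icc τ t, e s ω}
      ≤ ENNReal.ofReal α := by
  have hN := supermartingale_mixtureEProcess_add_tail he_nonneg he_int he_meas he_cond
  have hN_nonneg : ∀ (t : ℕ) ω, 0 ≤ mixtureEProcess e t ω + 1 / ((t : ℝ) + 1) := fun t ω ↦
    add_nonneg (mixtureEProcess_nonneg he_nonneg t ω) (by positivity)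
  calc _ ≤ μ {ω | ∃ t : ℕ, 1 / α ≤ mixtureEProcess e t ω + 1 / ((t : ℝ) + 1)} :=
        measure_mono <| by
          rintro ω ⟨t, -, ht⟩
          exact ⟨t, ht.trans (le_add_of_nonneg_right (by positivity))⟩
    _ ≤ ENNReal.ofReal ((∫ ω, mixtureEProcess e 0 ω + 1 / ((0 : ℕ) + 1 : ℝ) ∂μ) / (1 / α)) :=
        hN.measure_exists_ge_le hN_nonneg (one_div_pos.2 hα.1)
    _ = ENNReal.ofReal α := by simp
end
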